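/- For the A = 0 solution a(t) = ε(1 − 5ε²t)^{-3/10}, b(t) = (1 − 5ε²t)^{1/10}, the full torsion tensor norm satisfies |T_t|² = (15/4) a_t² b_t^{-4} = (15/4) ε² (1 − 5ε²t)^{-1}, which blows up as t → 1/(5ε²). -/

import Mathlib

/-! Below `t = 1/(5ε²)` the base `1 - 5ε²t` is positive, so the exponents add up:
`2·(-3/10) - 4·(1/10) = -1`. The norm is therefore a positive multiple of `(1 - 5ε²t)⁻¹`,
and `1 - 5ε²t → 0⁺` at the endpoint. -/

open Filter Topology

lemma mul_rpow_sq_mul_rpow_rpow {u : ℝ} (hu : 0 < u) (ε p q r : ℝ) :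
    (ε * u ^ p) ^ 2 * (u ^ q) ^ r = ε ^ 2 * u ^ (2 * p + q * r) := by
  rw [mul_pow, ← Real.rpow_natCast (u ^ p), ← Real.rpow_mul hu.le, ← Real.rpow_mul hu.le,
    mul_assoc, ← Real.rpow_add hu, mul_comm p]
  norm_num

lemma one_sub_mul_pos_of_lt_one_div {k t : ℝ} (hk : 0 < k) (ht : t < 1 / k) : 0 < 1 - k * t :=
  sub_pos.2 (by rwa [lt_div_iff₀' hk] at ht)

lemma tendsto_one_sub_mul_nhdsLT_nhdsGT {k : ℝ} (hk : 0 < k) :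
    Tendsto (fun t => 1 - k * t) (𝓝[<] (1 / k)) (𝓝[>] 0) := by
  refine tendsto_nhdsWithin_of_tendsto_nhds_of_eventually_within _ ?_ ?_
  · have hzero : 1 - k * (1 / k) = 0 := by field_simp; ring
    exact hzero ▸ ((continuous_const.sub (continuous_const.mul continuous_id)).tendsto _).mono_left
      nhdsWithin_le_nhds
  · filter_upwards [self_mem_nhdsWithin] with t ht using one_sub_mul_pos_of_lt_one_div hk ht

lemma tendsto_inv_one_sub_mul_atTop {k : ℝ} (hk : 0 < k) :
    Tendsto (fun t => (1 - k * t)⁻¹) (𝓝[<] (1 / k)) atTop :=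
  tendsto_inv_nhdsGT_zero.comp (tendsto_one_sub_mul_nhdsLT_nhdsGT hk)

/-- For the A = 0 solution, the torsion norm `|T_t|² = (15/4) a² b^(-4)
= (15/4) ε² (1-5ε²t)^(-1)`, which blows up as `t → 1/(5ε²)`. -/
theorem stmt10 (ε : ℝ) (hε : 0 < ε)
    (a b : ℝ → ℝ)
    (ha : ∀ t, a t = ε * (1 - 5*ε^2*t) ^ (-(3:ℝ)/10))
    (hb : ∀ t, b t = (1 - 5*ε^2*t) ^ ((1:ℝ)/10)) :
    (∀ t ∈ Set.Ico (0:ℝ) (1/(5*ε^2)),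
      (15/4) * (a t)^2 * (b t) ^ (-(4:ℝ)) = (15/4) * ε^2 * (1 - 5*ε^2*t) ^ (-(1:ℝ))) ∧
    Filter.Tendsto (fun t => (15/4) * (a t)^2 * (b t) ^ (-(4:ℝ)))
      (nhdsWithin (1/(5*ε^2)) (Set.Iio (1/(5*ε^2)))) Filter.atTop := by
  have hk : 0 < 5 * ε ^ 2 := by positivity
  have hnorm : ∀ t < 1 / (5 * ε ^ 2),
      (15/4) * (a t)^2 * (b t) ^ (-(4:ℝ)) = (15/4) * ε^2 * (1 - 5*ε^2*t)⁻¹ := fun t ht => by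
    rw [ha, hb, mul_assoc (15/4 : ℝ),
      mul_rpow_sq_mul_rpow_rpow (one_sub_mul_pos_of_lt_one_div hk ht), ← mul_assoc,
      ← Real.rpow_neg_one]
    norm_num
  refine ⟨fun t ht => by rw [hnorm t ht.2, Real.rpow_neg_one], ?_⟩
  refine ((tendsto_inv_one_sub_mul_atTop hk).const_mul_atTop
    (by positivity : (0 : ℝ) < 15 / 4 * ε ^ 2)).congr' ?_
  filter_upwards [self_mem_nhdsWithin] with t ht
  exact (hnorm t ht).symm
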